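/- arXiv:2201.08212 — 2 statements merged into one kernel-verified Lean document; each statement's English description precedes it below -/
import Mathlib

section
/- Let p, w, t, x, y be points in the Euclidean plane EuclideanSpace ℝ (Fin 2), let r > 0, and suppose t, x, y lie on the circle of center w and radius r, the segment pt is tangent to the circle at t (⟪p − t, w − t⟫ = 0 and p ≠ t), and x lies strictly between p and y. If dist p t = φ * dist p x with φ = (1 + √5)/2 the golden ratio, then dist x y = dist p t. -/
/-!
With `a = dist p x` and `c = dist x y`, the tangent–secant theorem gives `(φ a)² = a (a + c)`,
and `φ² = φ + 1` turns this into `φ a² = a c`, i.e. `c = φ a`.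
-/

open RealInnerProductSpace EuclideanGeometry

namespace EuclideanGeometry.Sphere

variable {V P : Type*} [NormedAddCommGroup V] [InnerProductSpace ℝ V] [MetricSpace P]
  [NormedAddTorsor V P]

theorem isTangentAt_affineSpan_pair_of_inner_eq_zero {s : Sphere P} {p t : P} (ht : t ∈ s)
    (h : ⟪p -ᵥ t, s.center -ᵥ t⟫ = 0) : s.IsTangentAt t line[ℝ, p, t] := by
  refine ⟨ht, right_mem_affineSpan_pair ℝ p t, affineSpan_pair_le_of_mem_of_mem ?_ ?_⟩
  · rw [mem_orthRadius_iff_inner_left, ← neg_vsub_eq_vsub_rev s.center t, inner_neg_right, h,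
      neg_zero]
  · exact self_mem_orthRadius s t

end EuclideanGeometry.Sphere

theorem Real.eq_goldenRatio_mul_of_sq_eq_mul_add {a c : ℝ} (ha : a ≠ 0)
    (h : (goldenRatio * a) ^ 2 = a * (a + c)) : c = goldenRatio * a := by
  refine mul_left_cancel₀ ha ?_
  linear_combination -h + a ^ 2 * goldenRatio_sq

theorem tangent_secant_config_golden_imp_chord_eq_tangent_general
    (p w t x y : EuclideanSpace ℝ (Fin 2)) (r : ℝ)
    (ht : dist w t = r) (hx : dist w x = r) (hy : dist w y = r)
    (htan : ⟪p - t, w - t⟫ = 0)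
    (hxy : Sbtw ℝ p x y)
    (hφ : dist p t = (1 + Real.sqrt 5) / 2 * dist p x) :
    dist x y = dist p t := by
  set s : Sphere (EuclideanSpace ℝ (Fin 2)) := ⟨w, r⟩
  have hp : p ∈ line[ℝ, x, y] :=
    hxy.wbtw.collinear.mem_affineSpan_of_mem_of_ne (by simp) (by simp) (by simp) hxy.ne_right
  have htangent : s.IsTangentAt t line[ℝ, p, t] :=
    s.isTangentAt_affineSpan_pair_of_inner_eq_zero (mem_sphere'.2 ht) htan
  have hpower := Sphere.dist_sq_eq_mul_dist_of_tangent_and_secant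
    (mem_sphere'.2 hx) (mem_sphere'.2 hy) hp htangent
  rw [← hxy.wbtw.dist_add_dist, hφ] at hpower
  rw [hφ]
  exact Real.eq_goldenRatio_mul_of_sq_eq_mul_add (dist_ne_zero.2 hxy.left_ne) hpower

/-- Geometric converse: in a tangent–secant configuration in the plane, if
`dist p t = φ * dist p x` with `φ = (1 + √5)/2`, then the chord equals the tangent. -/
theorem tangent_secant_config_golden_imp_chord_eq_tangent
    (p w t x y : EuclideanSpace ℝ (Fin 2)) (r : ℝ) (hr : 0 < r)
    (ht : dist w t = r) (hx : dist w x = r) (hy : dist w y = r)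
    (htan : ⟪p - t, w - t⟫ = 0) (hpt : p ≠ t)
    (hxy : Sbtw ℝ p x y)
    (hφ : dist p t = (1 + Real.sqrt 5) / 2 * dist p x) :
    dist x y = dist p t :=
  tangent_secant_config_golden_imp_chord_eq_tangent_general p w t x y r ht hx hy htan hxy hφ
end

section
/- Let p, w, t, x, y be points in the Euclidean plane EuclideanSpace ℝ (Fin 2), let r > 0, and suppose t, x, y lie on the circle of center w and radius r, the segment pt is tangent to the circle at t (⟪p − t, w − t⟫ = 0 and p ≠ t), the points t, x, y are pairwise distinct, x lies strictly between p and y, and the chord equals the tangent: dist x y = dist p t. Let α = ∠ x p t and β = ∠ x y t. Then 2 * r * φ * (sin β)^2 = (dist x y) * sin α, where φ = (1 + √5)/2 is the golden ratio. -/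
open RealInnerProductSpace EuclideanGeometry Module Real goldenRatio

/-!
By the tangent–secant theorem `|px| |py| = |pt|²`; since `|pt| = |xy|` and `|py| = |px| + |xy|`,
this says `|xy| = φ |px|`. The same relation makes the triangles `pxt` and `pty` similar, so
`|pt| |xt| = |px| |yt|`. The inscribed angle theorem gives `|xt| = 2 r sin β`, and the law of sines
in the triangle `pyt` gives `|yt| sin β = |pt| sin α`; the claim is an algebraic combination of
these four facts.
-/

theorem eq_goldenRatio_mul_of_mul_add_eq_sq {a c : ℝ} (ha : 0 ≤ a) (hc : 0 ≤ c)
    (h : a * (a + c) = c ^ 2) : c = φ * a := by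
  have hfactor : (c - φ * a) * (c - ψ * a) = 0 := by
    linear_combination -h - a ^ 2 * goldenRatio_add_goldenConj + a ^ 2 * goldenRatio_mul_goldenConj
  rcases mul_eq_zero.1 hfactor with h' | h'
  · linarith
  · obtain rfl : a = 0 := by nlinarith [goldenConj_neg]
    linarith

namespace EuclideanGeometry

variable {V P : Type*} [NormedAddCommGroup V] [InnerProductSpace ℝ V] [MetricSpace P]
  [NormedAddTorsor V P]

theorem abs_sin_oangle_eq_sin_angle [Fact (finrank ℝ V = 2)] [Module.Oriented ℝ V (Fin 2)]
    {p₁ p₂ p₃ : P} (h₁₂ : p₁ ≠ p₂) (h₃₂ : p₃ ≠ p₂) :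
    |(∡ p₁ p₂ p₃).sin| = Real.sin (∠ p₁ p₂ p₃) := by
  have hsin : 0 ≤ Real.sin (∠ p₁ p₂ p₃) := InnerProductGeometry.sin_angle_nonneg _ _
  rcases oangle_eq_angle_or_eq_neg_angle h₁₂ h₃₂ with h | h <;> simp [h, hsin]

theorem Sphere.dist_eq_two_mul_radius_mul_sin_angle [Fact (finrank ℝ V = 2)] {s : Sphere P}
    {p₁ p₂ p₃ : P} (hp₁ : p₁ ∈ s) (hp₂ : p₂ ∈ s) (hp₃ : p₃ ∈ s) (h₁₂ : p₁ ≠ p₂) (h₁₃ : p₁ ≠ p₃)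
    (h₂₃ : p₂ ≠ p₃) : dist p₁ p₃ = 2 * s.radius * Real.sin (∠ p₁ p₂ p₃) := by
  have : FiniteDimensional ℝ V := .of_fact_finrank_eq_two
  let : Module.Oriented ℝ V (Fin 2) := ⟨(finBasisOfFinrankEq ℝ V Fact.out).orientation⟩
  have hind : AffineIndependent ℝ ![p₁, p₂, p₃] :=
    Cospherical.affineIndependent_of_ne ⟨s.center, s.radius, by simp [hp₁, hp₂, hp₃]⟩ h₁₂ h₁₃ h₂₃
  have hsin : Real.sin (∠ p₁ p₂ p₃) ≠ 0 :=
    sin_ne_zero_of_not_collinear (affineIndependent_iff_not_collinear_set.1 hind)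
  rw [← div_eq_iff hsin, ← abs_sin_oangle_eq_sin_angle h₁₂ h₂₃.symm]
  exact Sphere.dist_div_sin_oangle_eq_two_mul_radius hp₁ hp₂ hp₃ h₁₂ h₁₃ h₂₃

theorem Sphere.mul_dist_eq_dist_sq_of_inner_eq_zero {s : Sphere P} {p t a b : P}
    (hp : p ∈ line[ℝ, a, b]) (ha : a ∈ s) (hb : b ∈ s) (ht : t ∈ s)
    (htan : ⟪p -ᵥ t, s.center -ᵥ t⟫ = 0) : dist p a * dist p b = dist p t ^ 2 := by
  have hpyth := (norm_sub_sq_eq_norm_sq_add_norm_sq_iff_real_inner_eq_zero _ _).2 htan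
  rw [vsub_sub_vsub_cancel_right, ← dist_eq_norm_vsub, ← dist_eq_norm_vsub, ← dist_eq_norm_vsub,
    dist_comm s.center, mem_sphere.1 ht] at hpyth
  have hpower : s.power p = dist p t ^ 2 := by
    rw [Sphere.power]
    linear_combination hpyth
  rw [mul_dist_eq_abs_power hp ha hb, hpower, abs_of_nonneg (sq_nonneg _)]

theorem dist_mul_dist_eq_dist_mul_dist_of_dist_sq_eq_mul {p x y t : P} (hangle : ∠ x p t = ∠ y p t)
    (hpow : dist p t ^ 2 = dist p x * dist p y) :
    dist p t * dist x t = dist p x * dist y t := by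
  have hx := law_cos x p t
  have hy := law_cos y p t
  rw [hangle] at hx
  rw [← sq_eq_sq₀ (by positivity) (by positivity)]
  simp only [dist_comm x p, dist_comm y p, dist_comm t p] at hx hy
  linear_combination (dist p t ^ 2 + dist p x * dist p y
    - 2 * dist p x * dist p t * Real.cos (∠ y p t)) * hpow + dist p t ^ 2 * hx - dist p x ^ 2 * hy

end EuclideanGeometry

theorem tangent_secant_golden_sine_sq_relation_general
    (p w t x y : EuclideanSpace ℝ (Fin 2)) (r : ℝ)
    (ht : dist w t = r) (hx : dist w x = r) (hy : dist w y = r)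
    (htan : ⟪p - t, w - t⟫ = 0)
    (htx : t ≠ x) (hty : t ≠ y)
    (hxy : Sbtw ℝ p x y)
    (hchord : dist x y = dist p t) :
    2 * r * ((1 + Real.sqrt 5) / 2) * Real.sin (∠ x y t) ^ 2 =
      dist x y * Real.sin (∠ x p t) := by
  have : Fact (finrank ℝ (EuclideanSpace ℝ (Fin 2)) = 2) := ⟨finrank_euclideanSpace_fin⟩
  let s : Sphere (EuclideanSpace ℝ (Fin 2)) := ⟨w, r⟩
  have hp : p ∈ line[ℝ, x, y] :=
    hxy.wbtw.collinear.mem_affineSpan_of_mem_of_ne (by simp) (by simp) (by simp) hxy.ne_right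
  have hpow : dist p x * dist p y = dist p t ^ 2 :=
    s.mul_dist_eq_dist_sq_of_inner_eq_zero hp (mem_sphere'.2 hx) (mem_sphere'.2 hy)
      (mem_sphere'.2 ht) htan
  have hgold : dist x y = φ * dist p x := eq_goldenRatio_mul_of_mul_add_eq_sq dist_nonneg
    dist_nonneg (by rw [hxy.wbtw.dist_add_dist, hpow, hchord])
  have hxt : dist x t = 2 * r * Real.sin (∠ x y t) :=
    s.dist_eq_two_mul_radius_mul_sin_angle (mem_sphere'.2 hx) (mem_sphere'.2 hy)
      (mem_sphere'.2 ht) hxy.ne_right htx.symm hty.symm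
  have hsimilar : dist p t * dist x t = dist p x * dist y t :=
    dist_mul_dist_eq_dist_mul_dist_of_dist_sq_eq_mul (hxy.angle_eq_left t) hpow.symm
  have hsines : Real.sin (∠ x y t) * dist y t = Real.sin (∠ x p t) * dist p t := by
    rw [hxy.symm.angle_eq_left t, hxy.angle_eq_left t, angle_comm y p t, dist_comm p t]
    exact law_sin p y t
  refine mul_right_cancel₀ (dist_pos.2 hty.symm).ne' ?_
  show 2 * r * φ * _ * _ = _
  linear_combination (-φ * Real.sin (∠ x y t) * dist y t) * hxt + φ * dist x t * hsines
    + φ * Real.sin (∠ x p t) * hsimilar - Real.sin (∠ x p t) * dist y t * hgold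

/-- Equation (14) of the paper, rewritten: in the golden-ratio tangent–secant
configuration (chord equals tangent), with `α = ∠ x p t` and `β = ∠ x y t`, one has
`2 r φ sin² β = (dist x y) * sin α` where `φ = (1 + √5)/2`. -/
theorem tangent_secant_golden_sine_sq_relation
    (p w t x y : EuclideanSpace ℝ (Fin 2)) (r : ℝ) (hr : 0 < r)
    (ht : dist w t = r) (hx : dist w x = r) (hy : dist w y = r)
    (htan : ⟪p - t, w - t⟫ = 0) (hpt : p ≠ t)
    (htx : t ≠ x) (hty : t ≠ y) (hxy' : x ≠ y)
    (hxy : Sbtw ℝ p x y)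
    (hchord : dist x y = dist p t) :
    2 * r * ((1 + Real.sqrt 5) / 2) * Real.sin (∠ x y t) ^ 2 =
      dist x y * Real.sin (∠ x p t) :=
  tangent_secant_golden_sine_sq_relation_general p w t x y r ht hx hy htan htx hty hxy hchord
end
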